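/- arXiv:1905.09610 — 3 statements merged into one kernel-verified Lean document; each statement's English description precedes it below -/
import Mathlib

section
/- If ⟨θ, H⟩ is a hypothetical answer to query Q over D_τ, then there exist a time point τ' ≥ τ and a data stream D' agreeing with D up to time τ (D'_τ = D_τ) such that θ is an answer to Q over D'_{τ'}. -/
/-- Abstract framework for continuous queries: facts, substitutions, a monotone
entailment relation, timestamps, EDB facts, and the ground query head `goal θ = Pθ`. -/
structure QFrame (Fact Subst : Type) where
  entails : Set Fact → Fact → Prop
  mono : ∀ {S S' : Set Fact} {f : Fact}, S ⊆ S' → entails S f → entails S' f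
  ts : Fact → ℕ
  edb : Fact → Prop
  goal : Subst → Fact

variable {Fact Subst : Type}

/-- The τ-history of a data stream `D`: facts with timestamp at most `τ`.
(With `τ = -1` this is the empty dataset.) -/
def QFrame.hist (M : QFrame Fact Subst) (D : Set Fact) (τ : ℤ) : Set Fact :=
  {f ∈ D | (M.ts f : ℤ) ≤ τ}

/-- `⟨θ, H⟩` is a hypothetical answer to `Q = ⟨P, Π⟩` over `D_τ`. -/
def QFrame.IsHypAns (M : QFrame Fact Subst) (Prg D : Set Fact) (τ : ℤ)
    (θ : Subst) (H : Set Fact) : Prop :=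
  H.Finite ∧ (∀ f ∈ H, M.edb f ∧ τ < (M.ts f : ℤ)) ∧
  M.entails (Prg ∪ M.hist D τ ∪ H) (M.goal θ) ∧
  ∀ H' ⊆ H, M.entails (Prg ∪ M.hist D τ ∪ H') (M.goal θ) → H' = H

/-- `θ` is an answer to `Q` over `D_τ` in the standard sense. -/
def QFrame.IsAns (M : QFrame Fact Subst) (Prg D : Set Fact) (τ : ℤ) (θ : Subst) : Prop :=
  M.entails (Prg ∪ M.hist D τ) (M.goal θ)

/-- `⟨θ, H, E⟩` is a supported answer to `Q` over `D_τ`: `⟨θ,H⟩` is a hypothetical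
answer and `E ⊆ D_τ` is nonempty evidence, minimal with `Π ∪ E ∪ H ⊨ Pθ`. -/
def QFrame.IsSuppAns (M : QFrame Fact Subst) (Prg D : Set Fact) (τ : ℤ)
    (θ : Subst) (H E : Set Fact) : Prop :=
  M.IsHypAns Prg D τ θ H ∧ E ⊆ M.hist D τ ∧ E.Nonempty ∧
  M.entails (Prg ∪ E ∪ H) (M.goal θ) ∧
  ∀ E' ⊆ E, M.entails (Prg ∪ E' ∪ H) (M.goal θ) → E' = E

/-- If `⟨θ, H⟩` is a hypothetical answer to `Q` over `D_τ`, then there exist a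
time point `τ' ≥ τ` and a data stream `D'` agreeing with `D` up to time `τ`
such that `θ` is an answer to `Q` over `D'_{τ'}`. -/
theorem stmt_1 (M : QFrame Fact Subst) (Prg D : Set Fact) (τ : ℤ)
    (θ : Subst) (H : Set Fact) (h : M.IsHypAns Prg D τ θ H) :
    ∃ τ' : ℤ, τ ≤ τ' ∧ ∃ D' : Set Fact,
      M.hist D' τ = M.hist D τ ∧ M.IsAns Prg D' τ' θ := by
  obtain ⟨hfin, hts, hent, -⟩ := h
  classical
  set τ' : ℤ := max τ ((hfin.toFinset.sup M.ts : ℕ) : ℤ) with hτ'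
  refine ⟨τ', le_max_left _ _, D ∪ H, ?_, ?_⟩
  · ext f
    simp only [QFrame.hist, Set.mem_setOf_eq, Set.mem_union]
    constructor
    · rintro ⟨hf | hf, hle⟩
      · exact ⟨hf, hle⟩
      · exact absurd hle (not_le.2 (hts f hf).2)
    · rintro ⟨hf, hle⟩; exact ⟨Or.inl hf, hle⟩
  · refine M.mono ?_ hent
    intro f hf
    rcases hf with (hf | hf) | hf
    · exact Or.inl hf
    · rcases hf with ⟨hfD, hle⟩
      exact Or.inr ⟨Or.inl hfD, hle.trans (le_max_left _ _)⟩
    · refine Or.inr ⟨Or.inr hf, ?_⟩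
      have : M.ts f ≤ hfin.toFinset.sup M.ts :=
        Finset.le_sup (hfin.mem_toFinset.2 hf)
      exact le_trans (by exact_mod_cast this) (le_max_right _ _)
end

section
/- If the temporal dependency graph of a program Π does not contain a path passing infinitely many times through edges labeled with '−' (negation), then Π is T-stratified, i.e., its temporal closure Π↓ admits a stratification. -/
/-- A normal temporal rule, normalized so that the head is `p(T)`: a head
predicate together with body literals `(q, k, s)` standing for `q(T + k)`,
negated iff `s = true`.  A program is a finite set of such rules. -/
abbrev TRule (P : Type) : Type := P × List (P × ℤ × Bool)

/-- A stratification of the temporal closure `Π↓` of `Π`: a stratum assignment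
on the instantiated predicates `p_t` such that, for every rule instance,
positive body dependencies stay in the same or a lower stratum and negative
dependencies go to a strictly lower stratum.  -/
def IsTStratification {P : Type} (Prg : Finset (TRule P)) (strat : P × ℕ → ℕ) : Prop :=
  ∀ r ∈ Prg, ∀ t : ℕ, ∀ b ∈ r.2, ∀ t' : ℕ, (t : ℤ) + b.2.1 = (t' : ℤ) →
    (b.2.2 = false → strat (b.1, t') ≤ strat (r.1, t)) ∧
    (b.2.2 = true → strat (b.1, t') < strat (r.1, t))

/-!
Forget the time offsets and put a stratum on `p_t` that depends on `p` only: the number of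
predicates reachable from `p` along a path that uses a negated literal. A negated literal from
`p` to `q` makes everything negatively reachable from `q` negatively reachable from `p`, and
`q` itself as well, but not from `q` unless `q` lies on a cycle through a negative edge. Such a
cycle, unrolled forever with the time offsets summed up, would be a path of the temporal
dependency graph through infinitely many negative edges.
-/

open Relation

section Periodic

variable {α : Type*} {r : α → α → Prop}

theorem Relation.ReflTransGen.exists_seq {a b : α} (h : ReflTransGen r a b) :
    ∃ n, ∃ g : ℕ → α, g 0 = a ∧ g n = b ∧ ∀ i < n, r (g i) (g (i + 1)) := by
  induction h using ReflTransGen.head_induction_on with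
  | refl => exact ⟨0, fun _ => b, rfl, rfl, by simp⟩
  | @head a c hac _ ih =>
    obtain ⟨n, g, hg0, hgn, hg⟩ := ih
    refine ⟨n + 1, fun | 0 => a | i + 1 => g i, rfl, hgn, ?_⟩
    rintro (_ | i) hi
    · simpa [hg0] using hac
    · exact hg i (by omega)

theorem apply_add_one_mod_of_apply_eq {c : ℕ → α} {m : ℕ} (hm : 0 < m) (hper : c m = c 0)
    (n : ℕ) : c ((n + 1) % m) = c (n % m + 1) := by
  rw [← Nat.mod_add_mod]
  obtain h | h : n % m + 1 < m ∨ n % m + 1 = m := by have := Nat.mod_lt n hm; omega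
  · rw [Nat.mod_eq_of_lt h]
  · rw [h, Nat.mod_self, hper]

theorem exists_seq_infinite_of_cycle {a b : α} (hab : r a b) (hba : ReflTransGen r b a) :
    ∃ f : ℕ → α, (∀ n, r (f n) (f (n + 1))) ∧ {n | f n = a ∧ f (n + 1) = b}.Infinite := by
  obtain ⟨m, g, hg0, hgm, hg⟩ := hba.exists_seq
  let c : ℕ → α := fun | 0 => a | i + 1 => g i
  have hc : ∀ i < m + 1, r (c i) (c (i + 1)) := by
    rintro (_ | i) hi
    · simpa [c, hg0] using hab
    · exact hg i (by omega)
  have hnext := apply_add_one_mod_of_apply_eq (c := c) m.succ_pos hgm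
  refine ⟨fun n => c (n % (m + 1)), fun n => ?_, ?_⟩
  · simpa only [hnext] using hc _ (Nat.mod_lt n m.succ_pos)
  · refine Set.infinite_of_injective_forall_mem (f := fun k => k * (m + 1))
      (fun k l h => Nat.eq_of_mul_eq_mul_right m.succ_pos h) fun k => ?_
    simp only [Set.mem_ofPred_eq, hnext, Nat.mul_mod_left]
    exact ⟨rfl, hg0⟩

end Periodic

section Dependency

variable {P : Type} {Prg : Finset (TRule P)}

/-- `s = true` for a negated literal; time offsets are forgotten. -/
def DepEdge (Prg : Finset (TRule P)) (s : Bool) (p q : P) : Prop :=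
  ∃ r ∈ Prg, r.1 = p ∧ ∃ b ∈ r.2, b.1 = q ∧ b.2.2 = s

def Dep (Prg : Finset (TRule P)) (p q : P) : Prop :=
  ∃ s, DepEdge Prg s p q

def NegReach (Prg : Finset (TRule P)) (p q : P) : Prop :=
  ∃ a b, ReflTransGen (Dep Prg) p a ∧ DepEdge Prg true a b ∧ ReflTransGen (Dep Prg) b q

def IsTemporalPath (Prg : Finset (TRule P)) (f : ℕ → P × ℤ) (s : ℕ → Bool) : Prop :=
  ∀ n, ∃ r ∈ Prg, (f n).1 = r.1 ∧ ∃ b ∈ r.2,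
    (f (n + 1)).1 = b.1 ∧ (f (n + 1)).2 = (f n).2 + b.2.1 ∧ s n = b.2.2

theorem exists_isTemporalPath {v : ℕ → P} {s : ℕ → Bool}
    (h : ∀ n, DepEdge Prg (s n) (v n) (v (n + 1))) : ∃ f, IsTemporalPath Prg f s := by
  choose r hr hr1 b hb hb1 hb2 using h
  refine ⟨fun n => (v n, ∑ i ∈ Finset.range n, (b i).2.1), fun n =>
    ⟨r n, hr n, (hr1 n).symm, b n, hb n, (hb1 n).symm, Finset.sum_range_succ _ _, (hb2 n).symm⟩⟩

theorem NegReach.of_negEdge {p q : P} (h : DepEdge Prg true p q) : NegReach Prg p q :=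
  ⟨p, q, .refl, h, .refl⟩

theorem NegReach.head {p q x : P} (h : Dep Prg p q) (hq : NegReach Prg q x) :
    NegReach Prg p x :=
  let ⟨a, b, hqa, hab, hbx⟩ := hq
  ⟨a, b, hqa.head h, hab, hbx⟩

theorem NegReach.exists_isTemporalPath_of_self {p : P} (h : NegReach Prg p p) :
    ∃ f s, IsTemporalPath Prg f s ∧ {n | s n = true}.Infinite := by
  classical
  obtain ⟨a, b, hpa, hab, hbp⟩ := h
  obtain ⟨v, hv, hinf⟩ := exists_seq_infinite_of_cycle (r := Dep Prg) ⟨true, hab⟩ (hbp.trans hpa)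
  let s n := decide (DepEdge Prg true (v n) (v (n + 1)))
  have hs : ∀ n, DepEdge Prg (s n) (v n) (v (n + 1)) := by
    intro n
    by_cases hneg : DepEdge Prg true (v n) (v (n + 1))
    · simp [s, hneg]
    · obtain ⟨_ | _, hedge⟩ := hv n
      · simpa [s, hneg] using hedge
      · exact absurd hedge hneg
  obtain ⟨f, hf⟩ := exists_isTemporalPath hs
  exact ⟨f, s, hf, hinf.mono fun n hn => by simp [s, hn.1, hn.2, hab]⟩

noncomputable def negRank (Prg : Finset (TRule P)) (p : P) : ℕ :=
  {x | NegReach Prg p x}.ncard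

theorem negRank_le_of_dep [Finite P] {p q : P} (h : Dep Prg p q) :
    negRank Prg q ≤ negRank Prg p :=
  Set.ncard_le_ncard (fun _ hx => NegReach.head h hx) (Set.toFinite _)

theorem negRank_lt_of_negEdge [Finite P] (hirrefl : ∀ p, ¬ NegReach Prg p p) {p q : P}
    (h : DepEdge Prg true p q) : negRank Prg q < negRank Prg p := by
  refine Set.ncard_lt_ncard ?_ (Set.toFinite _)
  refine (Set.ssubset_iff_of_subset fun _ hx => NegReach.head ⟨true, h⟩ hx).mpr ?_
  exact ⟨q, NegReach.of_negEdge h, hirrefl q⟩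

end Dependency

/-- If the temporal dependency graph of `Π` (nodes `p(T + j)`, with a `+`/`−`
labeled edge from `p(T + j)` to `q(T + j + k)` for each rule with head `p` and
body literal `q(T + k)`, negated iff the label is `−`) contains no path passing
infinitely many times through edges labeled `−`, then `Π` is `T`-stratified:
its temporal closure `Π↓` admits a stratification. -/
theorem stmt_17 {P : Type} [Fintype P] (Prg : Finset (TRule P))
    (hnopath : ¬ ∃ (f : ℕ → P × ℤ) (s : ℕ → Bool),
      (∀ n, ∃ r ∈ Prg, (f n).1 = r.1 ∧ ∃ b ∈ r.2,
        (f (n + 1)).1 = b.1 ∧ (f (n + 1)).2 = (f n).2 + b.2.1 ∧ s n = b.2.2) ∧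
      {n | s n = true}.Infinite) :
    ∃ strat : P × ℕ → ℕ, IsTStratification Prg strat := by
  have hirrefl : ∀ p, ¬ NegReach Prg p p := fun _ h =>
    hnopath h.exists_isTemporalPath_of_self
  refine ⟨fun pt => negRank Prg pt.1, fun r hr t b hb t' _ => ⟨fun hpos => ?_, fun hneg => ?_⟩⟩
  · exact negRank_le_of_dep ⟨false, r, hr, rfl, b, hb, rfl, hpos⟩
  · exact negRank_lt_of_negEdge hirrefl ⟨r, hr, rfl, b, hb, rfl, hneg⟩
end

section
/- Supported answers generalize answers: if ⟨θ, ∅, E⟩ is a supported answer to Q over D_τ (empty hypothesis set), then θ is an answer to Q over D_τ; and if ⟨θ, H, E⟩ is a supported answer to Q over D_τ, then there exist τ' ≥ τ and a data stream D' with D'_τ = D_τ such that θ is an answer to Q over D'_{τ'}. -/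
variable {Fact Subst : Type}

namespace QFrame

variable (M : QFrame Fact Subst)

lemma hist_mono {D D' : Set Fact} {τ τ' : ℤ} (hD : D ⊆ D') (hτ : τ ≤ τ') :
    M.hist D τ ⊆ M.hist D' τ' :=
  fun _ ⟨hf, hle⟩ => ⟨hD hf, hle.trans hτ⟩

lemma hist_union_of_forall_lt (D H : Set Fact) {τ : ℤ} (hH : ∀ f ∈ H, τ < (M.ts f : ℤ)) :
    M.hist (D ∪ H) τ = M.hist D τ := by
  ext f
  simp only [hist, Set.mem_ofPred_eq, Set.mem_union, or_and_right, or_iff_left_iff_imp]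
  exact fun ⟨hf, hle⟩ => absurd hle (not_le.2 (hH f hf))

lemma exists_ts_le_of_finite {H : Set Fact} (hH : H.Finite) :
    ∃ b : ℤ, ∀ f ∈ H, (M.ts f : ℤ) ≤ b := by
  obtain ⟨b, hb⟩ := (hH.image fun f => (M.ts f : ℤ)).bddAbove
  exact ⟨b, fun f hf => hb ⟨f, hf, rfl⟩⟩

variable {M} {Prg D : Set Fact} {τ : ℤ} {θ : Subst}

lemma IsHypAns.isAns (h : M.IsHypAns Prg D τ θ ∅) : M.IsAns Prg D τ θ := by
  simpa only [IsAns, Set.union_empty] using h.2.2.1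

/-- The hypotheses of a hypothetical answer form a finite set of future facts, so
adding them to the stream leaves `D_τ` unchanged and they all arrive by some time `τ'`. -/
lemma IsHypAns.exists_isAns_of_union {H : Set Fact} (h : M.IsHypAns Prg D τ θ H) :
    ∃ τ' : ℤ, τ ≤ τ' ∧ M.hist (D ∪ H) τ = M.hist D τ ∧ M.IsAns Prg (D ∪ H) τ' θ := by
  obtain ⟨hfin, hfuture, hent, -⟩ := h
  obtain ⟨b, hb⟩ := M.exists_ts_le_of_finite hfin
  refine ⟨max τ b, le_max_left τ b,
    M.hist_union_of_forall_lt D H fun f hf => (hfuture f hf).2, M.mono ?_ hent⟩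
  have hD : M.hist D τ ⊆ M.hist (D ∪ H) (max τ b) :=
    M.hist_mono Set.subset_union_left (le_max_left τ b)
  have hH : H ⊆ M.hist (D ∪ H) (max τ b) :=
    fun f hf => ⟨Or.inr hf, (hb f hf).trans (le_max_right τ b)⟩
  calc Prg ∪ M.hist D τ ∪ H = Prg ∪ (M.hist D τ ∪ H) := Set.union_assoc _ _ _
    _ ⊆ Prg ∪ M.hist (D ∪ H) (max τ b) :=
      Set.union_subset_union_right Prg (Set.union_subset hD hH)

end QFrame

/-- Supported answers generalize answers: if `⟨θ, ∅, E⟩` is a supported answer to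
`Q` over `D_τ` then `θ` is an answer over `D_τ`; and if `⟨θ, H, E⟩` is a supported
answer over `D_τ` then there are `τ' ≥ τ` and a data stream `D'` with
`D'_τ = D_τ` such that `θ` is an answer to `Q` over `D'_{τ'}`. -/
theorem stmt_19 (M : QFrame Fact Subst) (Prg D : Set Fact) (τ : ℤ) :
    (∀ (θ : Subst) (E : Set Fact), M.IsSuppAns Prg D τ θ ∅ E → M.IsAns Prg D τ θ) ∧
    (∀ (θ : Subst) (H E : Set Fact), M.IsSuppAns Prg D τ θ H E →
      ∃ τ' : ℤ, τ ≤ τ' ∧ ∃ D' : Set Fact,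
        M.hist D' τ = M.hist D τ ∧ M.IsAns Prg D' τ' θ) := by
  refine ⟨fun θ E h => h.1.isAns, fun θ H E h => ?_⟩
  obtain ⟨τ', hτ, hhist, hans⟩ := h.1.exists_isAns_of_union
  exact ⟨τ', hτ, D ∪ H, hhist, hans⟩
end
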